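/- Let (X, 𝒜) be a t-(v,k,λ) design with b pairwise distinct blocks on the point set X = [v], with t ≥ 2. Let K₂ be a positive integer with K₂ ≤ t and K₂ dividing v, set K₁ = v/K₂, and for k₁ ∈ [K₁] let D_{k₁} = {(k₁−1)K₂+1, …, k₁K₂}. For each s ∈ {1,…,t−1} let a_s be an integer with 0 ≤ a_s ≤ λ_s^t = λ·C(v−t, k−s)/C(v−t, k−t), not all zero. Define the b×K₁ array Q⁽⁰⁾ with rows indexed by 𝒜 by Q⁽⁰⁾_{A,k₁} = ⋆ if D_{k₁} ⊆ A and null otherwise; and for each k₁ ∈ [K₁] define the b×K₂ array Q^(k₁) with columns indexed by the points i ∈ D_{k₁} by: Q^(k₁)_{A,i} = ⋆ if i ∈ A and D_{k₁} ⊄ A; Q^(k₁)_{A,i} = the integer symbol (k₁, A∖{i}) if i ∈ A and D_{k₁} ⊆ A; and Q^(k₁)_{A,i} = null if i ∉ A. Let B be the array on R×[t]. Then (Q = (Q⁽⁰⁾, Q⁽¹⁾, …, Q^(K₁)), B) is a (K₁, K₂, K'; F, F'; Z₁, Z₂, Z'; 𝒮, 𝒮₁, …, 𝒮_{K₁}) hierarchical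 hotplug placement delivery array with K' = t, F = b, F' = Σ_{s=1}^{t−1} a_s·C(t,s), Z₁ = λ_{K₂}, Z₂ = λ_1 − λ_{K₂}, Z' = Σ_{s=1}^{t−1} a_s·C(t−1,s−1), |𝒮| = Σ_{s=1}^{t−1} a_s·C(t, s+1), and |𝒮_{k₁}| = λ_{K₂}·K₂ for every k₁ ∈ [K₁], where λ_s = λ·C(v−s,t−s)/C(k−s,t−s). -/

import Mathlib

open Finset

/-- `(X, 𝒜)` is a `t`-`(v, k, λ)` design with pairwise distinct blocks: `X` is a
set of `v` points, `𝒜` is a set of `k`-element subsets of `X` (blocks), with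
`v > k ≥ t ≥ 1`, and every `t`-element subset of `X` is contained in exactly
`lam` blocks. -/
def IsDesignF {α : Type*} [DecidableEq α] (t v k lam : ℕ)
    (X : Finset α) (𝒜 : Finset (Finset α)) : Prop :=
  X.card = v ∧ k < v ∧ t ≤ k ∧ 1 ≤ t ∧
  (∀ A ∈ 𝒜, A ⊆ X ∧ A.card = k) ∧
  ∀ T : Finset α, T ⊆ X → T.card = t →
    (𝒜.filter (fun A => T ⊆ A)).card = lam

/-- The row-index set `R = ⋃_{s=1}^{t−1} { (Y,i) : Y ⊆ [t], |Y| = s, i ∈ [a_s] }`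
of the array `B`, where `[n] = {1, …, n}`. -/
def Rset (t : ℕ) (a : ℕ → ℕ) : Finset (Finset ℕ × ℕ) :=
  (Finset.Icc 1 (t - 1)).biUnion fun s =>
    (Finset.powersetCard s (Finset.Icc 1 t)) ×ˢ (Finset.Icc 1 (a s))

/-- The entry of the array `B` at row `(Y,i)` and column `j`:
`none` is the star `⋆` (when `j ∈ Y`), `some (Y ∪ {j}, i)` is the integer entry. -/
def Bent (p : Finset ℕ × ℕ) (j : ℕ) : Option (Finset ℕ × ℕ) :=
  if j ∈ p.1 then none else some (insert j p.1, p.2)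

/-- The set of integer entries of the array `B`. -/
def IntEntries (t : ℕ) (a : ℕ → ℕ) : Finset (Finset ℕ × ℕ) :=
  (((Rset t a) ×ˢ (Finset.Icc 1 t)).filter
      (fun q : (Finset ℕ × ℕ) × ℕ => q.2 ∉ q.1.1)).image
    (fun q : (Finset ℕ × ℕ) × ℕ => (insert q.2 q.1.1, q.1.2))

/-- The point set `D_{k₁} = {(k₁−1)K₂+1, …, k₁K₂}` of mirror `k₁`. -/
def Dblk (K₂ k₁ : ℕ) : Finset ℕ := Finset.Icc ((k₁ - 1) * K₂ + 1) (k₁ * K₂)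

/-- The entry of the mirror subarray `Q^(k₁)` at row (block) `A` and column
(point) `i ∈ D_{k₁}`: `none` is null (`i ∉ A`); `some none` is the star `⋆`
(`i ∈ A` and `D_{k₁} ⊄ A`); `some (some (k₁, A ∖ {i}))` is the integer symbol
(`i ∈ A` and `D_{k₁} ⊆ A`). -/
def Qmir (K₂ k₁ : ℕ) (A : Finset ℕ) (i : ℕ) : Option (Option (ℕ × Finset ℕ)) :=
  if i ∈ A then
    (if Dblk K₂ k₁ ⊆ A then some (some (k₁, A.erase i)) else some none)
  else none

/-- The symbol set `𝒮_{k₁}` of the mirror subarray `Q^(k₁)`. -/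
def Ssym (𝒜 : Finset (Finset ℕ)) (K₂ k₁ : ℕ) : Finset (ℕ × Finset ℕ) :=
  (((𝒜.filter (fun A => Dblk K₂ k₁ ⊆ A)) ×ˢ Dblk K₂ k₁).image
    (fun p : Finset ℕ × ℕ => (k₁, p.1.erase p.2)))

/-!
Everything reduces to counting blocks through prescribed points. Double counting gives
`#{A ⊇ S} = λ_{|S|}`, and forbidding the points of `W` one at a time (Pascal's rule) shows that
exactly `λ_s^t` blocks meet a given `t`-set `T` in a prescribed `s`-subset. The `t` active users
own `t` distinct points, forming such a `T`; the row `(Y, i)` of `B` is realised by the `i`-th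
block meeting `T` exactly in the points labelled by `Y`, which is possible since `a_s ≤ λ_s^t`.
In `Q'` user `(k₁, i)` sees a star in row `A` iff `i ∈ A`, so the star patterns agree.
-/

namespace Finset

theorem exists_mapsTo_injOn_of_card_le {α β : Type*} [Nonempty β] {s : Finset α} {t : Finset β}
    (h : #s ≤ #t) : ∃ f : α → β, Set.MapsTo f s t ∧ Set.InjOn f s :=
  s.finite_toSet.exists_injOn_of_encard_le (t := (t : Set β))
    (by simpa only [Set.encard_coe_eq_coe_finsetCard, Nat.cast_le])

variable {α : Type*} [DecidableEq α]

theorem inter_eq_iff_subset_and_disjoint_sdiff {A S T : Finset α} (hST : S ⊆ T) :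
    A ∩ T = S ↔ S ⊆ A ∧ Disjoint A (T \ S) := by
  simp only [Finset.ext_iff, subset_iff, disjoint_left, mem_inter, mem_sdiff]
  grind

theorem eq_and_eq_of_erase_eq_erase {D A A' : Finset α} {i i' : α} (hi : i ∈ D) (hi' : i' ∈ D)
    (hA : D ⊆ A) (hA' : D ⊆ A') (h : A.erase i = A'.erase i') : i = i' ∧ A = A' := by
  obtain rfl : i = i' := by
    by_contra hne
    have : i' ∈ A.erase i := mem_erase.2 ⟨Ne.symm hne, hA hi'⟩
    rw [h] at this
    exact notMem_erase i' A' this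
  exact ⟨rfl, by rw [← insert_erase (hA hi), h, insert_erase (hA' hi)]⟩

end Finset

theorem mem_Rset {t : ℕ} {a : ℕ → ℕ} {p : Finset ℕ × ℕ} :
    p ∈ Rset t a ↔ p.1 ⊆ Icc 1 t ∧ #p.1 ∈ Icc 1 (t - 1) ∧ p.2 ∈ Icc 1 (a #p.1) := by
  simp only [Rset, mem_biUnion, mem_product, mem_powersetCard]
  constructor
  · rintro ⟨s, hs, ⟨hY, rfl⟩, hi⟩
    exact ⟨hY, hs, hi⟩
  · rintro ⟨hY, hs, hi⟩
    exact ⟨_, hs, ⟨hY, rfl⟩, hi⟩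

theorem card_Rset (t : ℕ) (a : ℕ → ℕ) :
    #(Rset t a) = ∑ s ∈ Icc 1 (t - 1), a s * t.choose s := by
  rw [Rset, card_biUnion fun s _ s' _ hss' =>
    disjoint_product.2 (Or.inl (pairwise_disjoint_powersetCard _ hss'))]
  refine sum_congr rfl fun s _ => ?_
  rw [card_product, card_powersetCard, Nat.card_Icc, Nat.card_Icc, Nat.add_sub_cancel,
    Nat.add_sub_cancel, mul_comm]

theorem Bent_eq_none_iff {p : Finset ℕ × ℕ} {j : ℕ} : Bent p j = none ↔ j ∈ p.1 := by
  unfold Bent; split_ifs with h <;> simp [h]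

theorem Bent_eq_some_iff {p : Finset ℕ × ℕ} {j : ℕ} {e : Finset ℕ × ℕ} :
    Bent p j = some e ↔ j ∉ p.1 ∧ (insert j p.1, p.2) = e := by
  unfold Bent; split_ifs with h <;> simp [h]

theorem card_filter_Rset_Bent_eq_none {t : ℕ} (a : ℕ → ℕ) {j : ℕ} (hj : j ∈ Icc 1 t) :
    #{p ∈ Rset t a | Bent p j = none} = ∑ s ∈ Icc 1 (t - 1), a s * (t - 1).choose (s - 1) := by
  rw [Rset, filter_biUnion, card_biUnion fun s _ s' _ hss' =>
    (disjoint_product.2 (Or.inl (pairwise_disjoint_powersetCard _ hss'))).mono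
      (filter_subset _ _) (filter_subset _ _)]
  refine sum_congr rfl fun s hs => ?_
  have hfilter : {p ∈ powersetCard s (Icc 1 t) ×ˢ Icc 1 (a s) | Bent p j = none}
      = {Y ∈ powersetCard s (Icc 1 t) | {j} ⊆ Y} ×ˢ Icc 1 (a s) := by
    ext ⟨Y, i⟩
    simp only [mem_filter, mem_product, Bent_eq_none_iff, singleton_subset_iff]
    tauto
  rw [hfilter, card_product, card_filter_powersetCard_subset _ _ _ (singleton_subset_iff.2 hj)
    (by rw [card_singleton]; exact (mem_Icc.1 hs).1)]
  simp only [card_singleton, Nat.card_Icc, Nat.add_sub_cancel, mul_comm]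

theorem IntEntries_eq (t : ℕ) (a : ℕ → ℕ) :
    IntEntries t a
      = (Icc 1 (t - 1)).biUnion fun s => powersetCard (s + 1) (Icc 1 t) ×ˢ Icc 1 (a s) := by
  ext ⟨Z, i⟩
  simp only [IntEntries, mem_image, mem_filter, mem_product, mem_Rset, mem_biUnion,
    mem_powersetCard, Prod.exists, Prod.mk.injEq]
  constructor
  · rintro ⟨Y, i, j, ⟨⟨⟨hY, hs, hi⟩, hj⟩, hjY⟩, rfl, rfl⟩
    exact ⟨#Y, hs, ⟨insert_subset hj hY, card_insert_of_notMem hjY⟩, hi⟩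
  · rintro ⟨s, hs, ⟨hZ, hZs⟩, hi⟩
    obtain ⟨j, hjZ⟩ := card_pos.1 (by omega : 0 < #Z)
    have hcard : #(Z.erase j) = s := by rw [card_erase_of_mem hjZ, hZs, Nat.add_sub_cancel]
    exact ⟨Z.erase j, i, j, ⟨⟨⟨(erase_subset _ _).trans hZ, hcard ▸ hs, hcard ▸ hi⟩, hZ hjZ⟩,
      notMem_erase _ _⟩, insert_erase hjZ, rfl⟩

theorem card_IntEntries (t : ℕ) (a : ℕ → ℕ) :
    #(IntEntries t a) = ∑ s ∈ Icc 1 (t - 1), a s * t.choose (s + 1) := by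
  rw [IntEntries_eq, card_biUnion fun s _ s' _ hss' =>
    disjoint_product.2 (Or.inl (pairwise_disjoint_powersetCard _ (by omega)))]
  refine sum_congr rfl fun s _ => ?_
  rw [card_product, card_powersetCard, Nat.card_Icc, Nat.card_Icc, Nat.add_sub_cancel,
    Nat.add_sub_cancel, mul_comm]

/-- Two cells of `B` with the same integer entry `(Y ∪ {j}, i) = (Y' ∪ {j'}, i')` have
`j ∈ Y'` and `j' ∈ Y`. -/
theorem Bent_cross_eq_none_of_eq_some {p p' : Finset ℕ × ℕ} {j j' : ℕ} {e : Finset ℕ × ℕ} (hne : (p, j) ≠ (p', j'))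
    (he : Bent p j = some e) (he' : Bent p' j' = some e) :
    p ≠ p' ∧ j ≠ j' ∧ Bent p j' = none ∧ Bent p' j = none := by
  obtain ⟨hjY, rfl⟩ := Bent_eq_some_iff.1 he
  obtain ⟨hj'Y', heq⟩ := Bent_eq_some_iff.1 he'
  simp only [Prod.mk.injEq] at heq
  obtain ⟨hins, hi⟩ := heq
  simp only [Bent_eq_none_iff]
  have hjj' : j ≠ j' := by
    rintro rfl
    refine hne (Prod.ext (Prod.ext ?_ hi.symm) rfl)
    rw [← erase_insert hjY, ← hins, erase_insert hj'Y']
  have hj'Y : j' ∈ p.1 := by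
    have := hins ▸ mem_insert_self j' p'.1
    exact (mem_insert.1 this).resolve_left (Ne.symm hjj')
  have hjY' : j ∈ p'.1 := by
    have := hins.symm ▸ mem_insert_self j p.1
    exact (mem_insert.1 this).resolve_left hjj'
  exact ⟨fun h => hjY (h ▸ hjY'), hjj', hj'Y, hjY'⟩

namespace IsDesignF

variable {α : Type*} [DecidableEq α] {t v k lam : ℕ} {X : Finset α} {𝒜 : Finset (Finset α)}

theorem card_filter_superset_mul (h : IsDesignF t v k lam X 𝒜) {S : Finset α} (hS : S ⊆ X)
    (hSt : #S ≤ t) :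
    #{A ∈ 𝒜 | S ⊆ A} * (k - #S).choose (t - #S) = lam * (v - #S).choose (t - #S) := by
  obtain ⟨hX, -, -, -, hblk, hlam⟩ := h
  have := card_mul_eq_card_mul (s := {A ∈ 𝒜 | S ⊆ A}) (t := {T ∈ X.powersetCard t | S ⊆ T})
    (fun A T => T ⊆ A) (m := (k - #S).choose (t - #S)) (n := lam)
    (fun A hA => by
      obtain ⟨hA, hSA⟩ := mem_filter.1 hA
      rw [← (hblk A hA).2, ← card_filter_powersetCard_subset S A t hSA hSt]
      congr 1
      ext T
      simp only [bipartiteAbove, mem_filter, mem_powersetCard]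
      constructor
      · rintro ⟨⟨⟨-, hT⟩, hST⟩, hTA⟩
        exact ⟨⟨hTA, hT⟩, hST⟩
      · rintro ⟨⟨hTA, hT⟩, hST⟩
        exact ⟨⟨⟨hTA.trans (hblk A hA).1, hT⟩, hST⟩, hTA⟩)
    (fun T hT => by
      obtain ⟨hT, hST⟩ := mem_filter.1 hT
      rw [mem_powersetCard] at hT
      rw [← hlam T hT.1 hT.2, bipartiteBelow, filter_filter]
      exact congrArg card (filter_congr fun A _ => ⟨And.right, fun hTA => ⟨hST.trans hTA, hTA⟩⟩))
  rw [this, card_filter_powersetCard_subset S X t hS hSt, hX, mul_comm]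

theorem card_filter_superset (h : IsDesignF t v k lam X 𝒜) {S : Finset α} (hS : S ⊆ X)
    (hSt : #S ≤ t) :
    #{A ∈ 𝒜 | S ⊆ A} = lam * (v - #S).choose (t - #S) / (k - #S).choose (t - #S) := by
  have hpos : 0 < (k - #S).choose (t - #S) := Nat.choose_pos (by have := h.2.2.1; omega)
  rw [← h.card_filter_superset_mul hS hSt, Nat.mul_div_cancel _ hpos]

/-- For `W = ∅` this is `card_filter_superset_mul` rewritten with
`C(v-s, k-s) C(k-s, t-s) = C(v-s, t-s) C(v-t, k-t)`; each point added to `W` is one Pascal step. -/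
theorem card_filter_superset_disjoint_mul (h : IsDesignF t v k lam X 𝒜) {S W : Finset α}
    (hS : S ⊆ X) (hW : W ⊆ X) (hSW : Disjoint S W) (hcard : #S + #W ≤ t) :
    #{A ∈ 𝒜 | S ⊆ A ∧ Disjoint A W} * (v - t).choose (k - t)
      = lam * (v - #S - #W).choose (k - #S) := by
  have hkv := h.2.1
  have htk := h.2.2.1
  induction W using Finset.induction_on generalizing S with
  | empty =>
    simp only [disjoint_empty_right, and_true, card_empty, add_zero, Nat.sub_zero] at hcard ⊢
    have hpos : 0 < (k - #S).choose (t - #S) := Nat.choose_pos (by omega)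
    have hchoose := Nat.choose_mul (n := v - #S) (k := k - #S) (s := t - #S) (by omega)
    rw [show v - #S - (t - #S) = v - t by omega, show k - #S - (t - #S) = k - t by omega]
      at hchoose
    apply Nat.eq_of_mul_eq_mul_right hpos
    rw [mul_right_comm, h.card_filter_superset_mul hS hcard, mul_assoc, mul_assoc, hchoose]
  | insert x W hxW ih =>
    rw [insert_subset_iff] at hW
    rw [disjoint_insert_right] at hSW
    rw [card_insert_of_notMem hxW] at hcard ⊢
    have hsplit : #{A ∈ 𝒜 | S ⊆ A ∧ Disjoint A W}
        = #{A ∈ 𝒜 | S ⊆ A ∧ Disjoint A (insert x W)}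
          + #{A ∈ 𝒜 | insert x S ⊆ A ∧ Disjoint A W} := by
      rw [← card_filter_add_card_filter_not (fun A => x ∈ A), filter_filter, filter_filter,
        add_comm]
      congr 2 <;> ext A <;>
        simp only [mem_filter, disjoint_insert_right, insert_subset_iff] <;> tauto
    have ih₁ := ih hS hW.2 hSW.2 (by omega)
    have ih₂ := ih (insert_subset hW.1 hS) hW.2
      (disjoint_insert_left.2 ⟨hxW, hSW.2⟩) (by rw [card_insert_of_notMem hSW.1]; omega)
    rw [card_insert_of_notMem hSW.1] at ih₂
    have hpascal : (v - #S - #W).choose (k - #S)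
        = (v - #S - (#W + 1)).choose (k - #S) + (v - (#S + 1) - #W).choose (k - (#S + 1)) := by
      rw [show v - #S - #W = (v - #S - (#W + 1)) + 1 by omega,
        show k - #S = (k - (#S + 1)) + 1 by omega, Nat.choose_succ_succ',
        show v - (#S + 1) - #W = v - #S - (#W + 1) by omega, add_comm]
    rw [hsplit, add_mul, ih₂, hpascal, mul_add] at ih₁
    exact Nat.add_right_cancel ih₁

theorem card_filter_inter_eq_mul (h : IsDesignF t v k lam X 𝒜) {S T : Finset α}
    (hT : T ⊆ X) (hTt : #T = t) (hST : S ⊆ T) :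
    #{A ∈ 𝒜 | A ∩ T = S} * (v - t).choose (k - t) = lam * (v - t).choose (k - #S) := by
  have hS := card_le_card hST
  have hsdiff : #(T \ S) = t - #S := by rw [card_sdiff_of_subset hST, hTt]
  have hcount := h.card_filter_superset_disjoint_mul (hST.trans hT) (sdiff_subset.trans hT)
    disjoint_sdiff (by omega)
  rw [hsdiff, show v - #S - (t - #S) = v - t by omega] at hcount
  rw [← hcount, filter_congr fun A _ => inter_eq_iff_subset_and_disjoint_sdiff hST]

theorem exists_injOn_Rset (h : IsDesignF t v k lam X 𝒜) (a : ℕ → ℕ)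
    (ha : ∀ s ∈ Icc 1 (t - 1), a s ≤ lam * (v - t).choose (k - s) / (v - t).choose (k - t))
    {φ : ℕ → α} (hφ : Set.InjOn φ (Icc 1 t)) (hφX : Set.MapsTo φ (Icc 1 t) X) :
    ∃ g : Finset ℕ × ℕ → Finset α, Set.InjOn g (Rset t a) ∧ Set.MapsTo g (Rset t a) 𝒜 ∧
      ∀ p ∈ Rset t a, ∀ j ∈ Icc 1 t, φ j ∈ g p ↔ j ∈ p.1 := by
  set T := (Icc 1 t).image φ
  have hT : T ⊆ X := image_subset_iff.2 fun j hj => hφX (mem_coe.2 hj)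
  have hTt : #T = t := by rw [card_image_of_injOn hφ, Nat.card_Icc, Nat.add_sub_cancel]
  have hpos : 0 < (v - t).choose (k - t) := Nat.choose_pos (by have := h.2.1; omega)
  have hblocks : ∀ Y : Finset ℕ, ∃ f : ℕ → Finset α, Y ⊆ Icc 1 t → #Y ∈ Icc 1 (t - 1) →
      Set.MapsTo f (Icc 1 (a #Y)) ({A ∈ 𝒜 | A ∩ T = Y.image φ} : Finset (Finset α)) ∧
        Set.InjOn f (Icc 1 (a #Y)) := by
    intro Y
    by_cases hY : Y ⊆ Icc 1 t ∧ #Y ∈ Icc 1 (t - 1)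
    · have hcount := h.card_filter_inter_eq_mul hT hTt (image_subset_image hY.1)
      rw [card_image_of_injOn (hφ.mono (coe_subset.2 hY.1))] at hcount
      obtain ⟨f, hf⟩ := exists_mapsTo_injOn_of_card_le (s := Icc 1 (a #Y))
        (t := {A ∈ 𝒜 | A ∩ T = Y.image φ}) (by
          rw [Nat.card_Icc, Nat.add_sub_cancel]
          exact (ha _ hY.2).trans_eq (by rw [← hcount, Nat.mul_div_cancel _ hpos]))
      exact ⟨f, fun _ _ => hf⟩
    · exact ⟨fun _ => ∅, fun h₁ h₂ => absurd ⟨h₁, h₂⟩ hY⟩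
  choose f hf using hblocks
  have hg : ∀ p ∈ Rset t a, f p.1 p.2 ∈ 𝒜 ∧ f p.1 p.2 ∩ T = p.1.image φ := fun p hp => by
    obtain ⟨hY, hs, hi⟩ := mem_Rset.1 hp
    simpa using (hf p.1 hY hs).1 hi
  have htrace : ∀ p ∈ Rset t a, ∀ j ∈ Icc 1 t, φ j ∈ f p.1 p.2 ↔ j ∈ p.1 := fun p hp j hj => by
    have hY : (p.1 : Set ℕ) ⊆ Icc 1 t := coe_subset.2 (mem_Rset.1 hp).1
    rw [← mem_coe (a := j), ← hφ.mem_image_iff hY hj, ← coe_image, mem_coe, ← (hg p hp).2,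
      mem_inter, and_iff_left (mem_image_of_mem φ hj)]
  refine ⟨fun p => f p.1 p.2, fun p hp p' hp' hpp' => ?_, fun p hp => (hg p hp).1, htrace⟩
  obtain ⟨hY, hs, hi⟩ := mem_Rset.1 hp
  obtain ⟨hY', -, hi'⟩ := mem_Rset.1 hp'
  have hYY' : p.1 = p'.1 := by
    ext j
    by_cases hj : j ∈ Icc 1 t
    · rw [← htrace p hp j hj, ← htrace p' hp' j hj]
      exact Iff.of_eq (congrArg (φ j ∈ ·) hpp')
    · exact iff_of_false (fun h => hj (hY h)) (fun h => hj (hY' h))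
  refine Prod.ext hYY' ((hf p.1 hY hs).2 hi (hYY' ▸ hi') ?_)
  simp only at hpp'
  rw [hpp', hYY']

end IsDesignF

theorem card_Dblk {K₂ k₁ : ℕ} (hk₁ : 1 ≤ k₁) : #(Dblk K₂ k₁) = K₂ := by
  obtain ⟨m, rfl⟩ : ∃ m, k₁ = m + 1 := ⟨k₁ - 1, by omega⟩
  rw [Dblk, Nat.card_Icc, Nat.add_sub_cancel, add_mul, one_mul]
  omega

theorem Dblk_subset_Icc {K₂ k₁ v : ℕ} (hk₁ : k₁ ≤ v / K₂) : Dblk K₂ k₁ ⊆ Icc 1 v := by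
  have hle : k₁ * K₂ ≤ v := (Nat.mul_le_mul_right K₂ hk₁).trans (Nat.div_mul_le_self v K₂)
  intro i hi
  rw [Dblk, mem_Icc] at hi
  rw [mem_Icc]
  omega

theorem eq_of_mem_Dblk {K₂ k₁ i : ℕ} (hi : i ∈ Dblk K₂ k₁) : k₁ = (i - 1) / K₂ + 1 := by
  rw [Dblk, mem_Icc] at hi
  obtain ⟨m, rfl⟩ : ∃ m, k₁ = m + 1 := ⟨k₁ - 1, by
    rcases Nat.eq_zero_or_pos k₁ with rfl | hk₁
    · simp only [Nat.zero_sub, zero_mul] at hi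
      omega
    · omega⟩
  rw [Nat.add_sub_cancel] at hi
  rw [Nat.div_eq_of_lt_le (k := m) (by omega) (by omega)]

section Mirror

variable {K₂ k₁ : ℕ} {A : Finset ℕ} {i : ℕ}

theorem Qmir_eq_some_none_iff : Qmir K₂ k₁ A i = some none ↔ i ∈ A ∧ ¬ Dblk K₂ k₁ ⊆ A := by
  unfold Qmir; split_ifs <;> simp_all

theorem Qmir_eq_some_some_iff {l : ℕ × Finset ℕ} :
    Qmir K₂ k₁ A i = some (some l) ↔ i ∈ A ∧ Dblk K₂ k₁ ⊆ A ∧ (k₁, A.erase i) = l := by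
  unfold Qmir; split_ifs <;> simp_all

theorem Qmir_ne_none (hi : i ∈ A) : Qmir K₂ k₁ A i ≠ none := by
  unfold Qmir; split_ifs <;> simp

/-- The star in `Q'` at `(A, (k₁, i))`, whether it comes from `Q⁽⁰⁾` or from `Q^(k₁)`, just
records `i ∈ A`. -/
theorem Dblk_subset_or_Qmir_eq_some_none_iff (hi : i ∈ Dblk K₂ k₁) :
    (Dblk K₂ k₁ ⊆ A ∨ Qmir K₂ k₁ A i = some none) ↔ i ∈ A := by
  rw [Qmir_eq_some_none_iff]
  by_cases hD : Dblk K₂ k₁ ⊆ A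
  · simp [hD, hD hi]
  · simp [hD]

theorem card_filter_Qmir_eq_some_none (𝒜 : Finset (Finset ℕ)) (hi : i ∈ Dblk K₂ k₁) :
    #{A ∈ 𝒜 | Qmir K₂ k₁ A i = some none}
      = #{A ∈ 𝒜 | {i} ⊆ A} - #{A ∈ 𝒜 | Dblk K₂ k₁ ⊆ A} := by
  rw [← card_filter_add_card_filter_not (s := {A ∈ 𝒜 | {i} ⊆ A}) (fun A => Dblk K₂ k₁ ⊆ A),
    filter_filter, filter_filter]
  simp only [Qmir_eq_some_none_iff, singleton_subset_iff]
  have hD : {A ∈ 𝒜 | i ∈ A ∧ Dblk K₂ k₁ ⊆ A} = {A ∈ 𝒜 | Dblk K₂ k₁ ⊆ A} :=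
    filter_congr fun A _ => and_iff_right_of_imp fun hD => hD hi
  rw [hD]
  omega

theorem eq_of_Qmir_eq_some_some {A' : Finset ℕ} {i' : ℕ} {l : ℕ × Finset ℕ}
    (hi : i ∈ Dblk K₂ k₁) (hi' : i' ∈ Dblk K₂ k₁)
    (h : Qmir K₂ k₁ A i = some (some l)) (h' : Qmir K₂ k₁ A' i' = some (some l)) :
    (A, i) = (A', i') := by
  obtain ⟨-, hD, rfl⟩ := Qmir_eq_some_some_iff.1 h
  obtain ⟨-, hD', hl⟩ := Qmir_eq_some_some_iff.1 h'
  obtain ⟨rfl, rfl⟩ := eq_and_eq_of_erase_eq_erase hi hi' hD hD' (Prod.mk.inj hl).2.symm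
  rfl

theorem card_Ssym (𝒜 : Finset (Finset ℕ)) (hk₁ : 1 ≤ k₁) :
    #(Ssym 𝒜 K₂ k₁) = #{A ∈ 𝒜 | Dblk K₂ k₁ ⊆ A} * K₂ := by
  rw [Ssym, card_image_of_injOn, card_product, card_Dblk hk₁]
  rintro ⟨A, i⟩ hAi ⟨A', i'⟩ hAi' heq
  simp only [coe_product, coe_filter, Set.mem_prod, Set.mem_ofPred_eq, mem_coe] at hAi hAi'
  obtain ⟨rfl, rfl⟩ := eq_and_eq_of_erase_eq_erase hAi.2 hAi'.2 hAi.1.2 hAi'.1.2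
    (Prod.mk.inj heq).2
  rfl

theorem disjoint_Ssym (𝒜 : Finset (Finset ℕ)) {k₁' : ℕ} (hne : k₁ ≠ k₁') :
    Disjoint (Ssym 𝒜 K₂ k₁) (Ssym 𝒜 K₂ k₁') := by
  simp only [Ssym, disjoint_left, mem_image]
  rintro _ ⟨_, -, rfl⟩ ⟨_, -, heq⟩
  exact hne (congrArg Prod.fst heq).symm

end Mirror

/-- Users in distinct mirrors own disjoint point sets, so `τ` is a labelled `t`-set of points
and `exists_injOn_Rset` applies. -/
theorem exists_hotplug_rows {t v k lam K₁ K₂ : ℕ} {𝒜 : Finset (Finset ℕ)}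
    (hdes : IsDesignF t v k lam (Icc 1 v) 𝒜) (hK₁ : K₁ = v / K₂) (a : ℕ → ℕ)
    (ha : ∀ s ∈ Icc 1 (t - 1), a s ≤ lam * (v - t).choose (k - s) / (v - t).choose (k - t))
    {τ : Finset (ℕ × ℕ)} (hτ : ∀ u ∈ τ, u.1 ∈ Icc 1 K₁ ∧ u.2 ∈ Dblk K₂ u.1) (hτt : #τ = t) :
    ∃ ζ : Finset (Finset ℕ), ζ ⊆ 𝒜 ∧ #ζ = ∑ s ∈ Icc 1 (t - 1), a s * t.choose s ∧
      ∃ (ρ : Finset ℕ → Finset ℕ × ℕ) (σ : ℕ × ℕ → ℕ),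
        Set.BijOn ρ ζ (Rset t a) ∧ Set.BijOn σ τ (Icc 1 t) ∧
        ∀ A ∈ ζ, ∀ u ∈ τ, ((Dblk K₂ u.1 ⊆ A ∨ Qmir K₂ u.1 A u.2 = some none) ↔ σ u ∈ (ρ A).1) := by
  have hsnd : Set.InjOn Prod.snd (τ : Set (ℕ × ℕ)) := fun u hu u' hu' h =>
    Prod.ext ((eq_of_mem_Dblk (hτ u hu).2).trans (h ▸ (eq_of_mem_Dblk (hτ u' hu').2).symm)) h
  obtain ⟨σ, hσ⟩ := τ.finite_toSet.exists_bijOn_of_encard_eq (t := (Icc 1 t : Set ℕ))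
    (by simp only [Set.encard_coe_eq_coe_finsetCard, hτt, Nat.card_Icc, Nat.add_sub_cancel])
  have hσinv := hσ.invOn_invFunOn
  set φ : ℕ → ℕ := fun j => (Function.invFunOn σ τ j).2
  have hφ : ∀ u ∈ τ, φ (σ u) = u.2 := fun u hu => by
    simp only [φ, hσinv.1 (mem_coe.2 hu)]
  have hbij := hσ.symm hσinv.symm
  obtain ⟨g, hg, hgA, hgφ⟩ := hdes.exists_injOn_Rset a ha (φ := φ)
    (hsnd.comp hbij.injOn hbij.mapsTo)
    (fun j hj => by
      obtain ⟨hk₁, hi⟩ := hτ _ (hbij.mapsTo hj)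
      exact Dblk_subset_Icc (hK₁ ▸ (mem_Icc.1 hk₁).2) hi)
  have hρ := hg.bijOn_image.symm hg.bijOn_image.invOn_invFunOn.symm
  refine ⟨(Rset t a).image g, image_subset_iff.2 fun p hp => hgA hp,
    by rw [card_image_of_injOn hg, card_Rset], Function.invFunOn g (Rset t a), σ,
    by rwa [coe_image], hσ, fun A hA u hu => ?_⟩
  obtain ⟨p, hp, rfl⟩ := mem_image.1 hA
  rw [Dblk_subset_or_Qmir_eq_some_none_iff (hτ u hu).2, hg.leftInvOn_invFunOn hp, ← hφ u hu]
  exact hgφ p hp (σ u) (hσ.mapsTo hu)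

theorem stmt12_general (t v k lam K₁ K₂ : ℕ)
    (𝒜 : Finset (Finset ℕ))
    (hdes : IsDesignF t v k lam (Finset.Icc 1 v) 𝒜)
    (hK₂t : K₂ ≤ t) (hK₁ : K₁ = v / K₂)
    (a : ℕ → ℕ)
    (ha : ∀ s ∈ Finset.Icc 1 (t - 1),
      a s ≤ lam * Nat.choose (v - t) (k - s) / Nat.choose (v - t) (k - t)) :
    -- (A1) each column of Q⁽⁰⁾ has Z₁ = λ_{K₂} stars
    (∀ k₁ ∈ Finset.Icc 1 K₁,
      (𝒜.filter (fun A => Dblk K₂ k₁ ⊆ A)).card =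
        lam * Nat.choose (v - K₂) (t - K₂) / Nat.choose (k - K₂) (t - K₂)) ∧
    -- (A2) each column of Q^(k₁) has Z₂ = λ₁ − λ_{K₂} stars
    (∀ k₁ ∈ Finset.Icc 1 K₁, ∀ i ∈ Dblk K₂ k₁,
      (𝒜.filter (fun A => Qmir K₂ k₁ A i = some none)).card =
        lam * Nat.choose (v - 1) (t - 1) / Nat.choose (k - 1) (t - 1)
          - lam * Nat.choose (v - K₂) (t - K₂) / Nat.choose (k - K₂) (t - K₂)) ∧
    -- (A3) the symbol sets 𝒮_{k₁} are pairwise disjoint, and a star in Q⁽⁰⁾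
    -- forces non-null entries in the corresponding row of Q^(k₁)
    (∀ k₁ ∈ Finset.Icc 1 K₁, ∀ k₁' ∈ Finset.Icc 1 K₁, k₁ ≠ k₁' →
      Disjoint (Ssym 𝒜 K₂ k₁) (Ssym 𝒜 K₂ k₁')) ∧
    (∀ k₁ ∈ Finset.Icc 1 K₁, ∀ A ∈ 𝒜, Dblk K₂ k₁ ⊆ A →
      ∀ i ∈ Dblk K₂ k₁, Qmir K₂ k₁ A i ≠ none) ∧
    -- (A4) two distinct cells of Q^(k₁) with the same symbol lie in distinct
    -- rows and distinct columns and the cross cells are stars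
    (∀ k₁ ∈ Finset.Icc 1 K₁, ∀ A ∈ 𝒜, ∀ A' ∈ 𝒜,
      ∀ i ∈ Dblk K₂ k₁, ∀ i' ∈ Dblk K₂ k₁,
      ((A, i) ≠ (A', i')) → ∀ l : ℕ × Finset ℕ,
        Qmir K₂ k₁ A i = some (some l) → Qmir K₂ k₁ A' i' = some (some l) →
          A ≠ A' ∧ i ≠ i' ∧
            Qmir K₂ k₁ A i' = some none ∧ Qmir K₂ k₁ A' i = some none) ∧
    -- B is a (K', F', Z', |𝒮|) PDA
    ((Rset t a).card = ∑ s ∈ Finset.Icc 1 (t - 1), a s * Nat.choose t s ∧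
      (∀ j ∈ Finset.Icc 1 t,
        ((Rset t a).filter (fun p => Bent p j = none)).card =
          ∑ s ∈ Finset.Icc 1 (t - 1), a s * Nat.choose (t - 1) (s - 1)) ∧
      (IntEntries t a).card =
        ∑ s ∈ Finset.Icc 1 (t - 1), a s * Nat.choose t (s + 1) ∧
      (∀ p ∈ Rset t a, ∀ p' ∈ Rset t a,
        ∀ j ∈ Finset.Icc 1 t, ∀ j' ∈ Finset.Icc 1 t,
        (p, j) ≠ (p', j') → ∀ e : Finset ℕ × ℕ,
          Bent p j = some e → Bent p' j' = some e →
            p ≠ p' ∧ j ≠ j' ∧ Bent p j' = none ∧ Bent p' j = none)) ∧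
    -- |𝒮_{k₁}| = λ_{K₂}·K₂ for every k₁ ∈ [K₁]
    (∀ k₁ ∈ Finset.Icc 1 K₁,
      (Ssym 𝒜 K₂ k₁).card =
        (lam * Nat.choose (v - K₂) (t - K₂) / Nat.choose (k - K₂) (t - K₂)) * K₂) ∧
    -- hotplug condition: for every set τ of K' = t users (k₁, i) with
    -- k₁ ∈ [K₁] and i ∈ D_{k₁}, there is a row set ζ of size F' on which the
    -- star pattern of Q' matches that of B (under suitable bijections)
    (∀ τ : Finset (ℕ × ℕ),
      (∀ u ∈ τ, u.1 ∈ Finset.Icc 1 K₁ ∧ u.2 ∈ Dblk K₂ u.1) → τ.card = t →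
      ∃ ζ : Finset (Finset ℕ), ζ ⊆ 𝒜 ∧
        ζ.card = ∑ s ∈ Finset.Icc 1 (t - 1), a s * Nat.choose t s ∧
        ∃ (ρ : Finset ℕ → Finset ℕ × ℕ) (σ : ℕ × ℕ → ℕ),
          Set.BijOn ρ ↑ζ ↑(Rset t a) ∧
          Set.BijOn σ ↑τ ↑(Finset.Icc 1 t) ∧
          ∀ A ∈ ζ, ∀ u ∈ τ,
            ((Dblk K₂ u.1 ⊆ A ∨ Qmir K₂ u.1 A u.2 = some none) ↔
              σ u ∈ (ρ A).1)) := by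
  have hD : ∀ k₁ ∈ Finset.Icc 1 K₁, Dblk K₂ k₁ ⊆ Finset.Icc 1 v ∧ #(Dblk K₂ k₁) = K₂ :=
    fun k₁ hk₁ => ⟨Dblk_subset_Icc (hK₁ ▸ (mem_Icc.1 hk₁).2), card_Dblk (mem_Icc.1 hk₁).1⟩
  have hA1 : ∀ k₁ ∈ Finset.Icc 1 K₁, #{A ∈ 𝒜 | Dblk K₂ k₁ ⊆ A}
      = lam * (v - K₂).choose (t - K₂) / (k - K₂).choose (t - K₂) := fun k₁ hk₁ => by
    obtain ⟨hDv, hDcard⟩ := hD k₁ hk₁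
    rw [hdes.card_filter_superset hDv (hDcard.trans_le hK₂t), hDcard]
  refine ⟨hA1, fun k₁ hk₁ i hi => ?_, fun k₁ _ k₁' _ hne => disjoint_Ssym 𝒜 hne,
    fun k₁ _ A _ hDA i hi => Qmir_ne_none (hDA hi),
    fun k₁ _ A _ A' _ i hi i' hi' hne l h h' => absurd (eq_of_Qmir_eq_some_some hi hi' h h') hne,
    ⟨card_Rset t a, fun j hj => card_filter_Rset_Bent_eq_none a hj, card_IntEntries t a,
      fun p _ p' _ j _ j' _ hne e he he' => Bent_cross_eq_none_of_eq_some hne he he'⟩,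
    fun k₁ hk₁ => by rw [card_Ssym 𝒜 (mem_Icc.1 hk₁).1, hA1 k₁ hk₁],
    fun τ hτ hτt => exists_hotplug_rows hdes hK₁ a ha hτ hτt⟩
  have hi1 : ({i} : Finset ℕ) ⊆ Finset.Icc 1 v := singleton_subset_iff.2 ((hD k₁ hk₁).1 hi)
  rw [card_filter_Qmir_eq_some_none 𝒜 hi, hA1 k₁ hk₁,
    hdes.card_filter_superset hi1 (by rw [card_singleton]; exact hdes.2.2.2.1), card_singleton]

/-- The pair `(Q, B)` built from a `t`-`(v,k,λ)` design on `[v]` is a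
`(K₁,K₂,K';F,F';Z₁,Z₂,Z';𝒮,𝒮₁,…,𝒮_{K₁})` HHPDA with `K' = t`, `F = b`,
`F' = Σ a_s·C(t,s)`, `Z₁ = λ_{K₂}`, `Z₂ = λ₁ − λ_{K₂}`, `Z' = Σ a_s·C(t−1,s−1)`,
`|𝒮| = Σ a_s·C(t,s+1)` and `|𝒮_{k₁}| = λ_{K₂}·K₂`.  The conjuncts are: (A1)
each column of `Q⁽⁰⁾` has `Z₁ = λ_{K₂}` stars; (A2) each column of each `Q^(k₁)`
has `Z₂ = λ₁ − λ_{K₂}` stars; (A3) the symbol sets `𝒮_{k₁}` are pairwise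
disjoint (each symbol occurs only in its own subarray) and a star in `Q⁽⁰⁾`
forces every entry of that row of `Q^(k₁)` to be a star or a symbol of
`𝒮_{k₁}` (non-null); (A4) two distinct cells of `Q^(k₁)` with the same symbol
lie in distinct rows and columns with starred cross cells; `B` is a
`(t,F',Z',|𝒮|)` PDA; `|𝒮_{k₁}| = λ_{K₂}·K₂ `; and for every choice `τ` of `t`
active users there is a row set `ζ` of size `F'` on which the star pattern of
`Q'` matches that of `B`. -/
theorem stmt12 (t v k lam b K₁ K₂ : ℕ)
    (𝒜 : Finset (Finset ℕ))
    (hdes : IsDesignF t v k lam (Finset.Icc 1 v) 𝒜)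
    (hb : 𝒜.card = b) (ht : 2 ≤ t)
    (hK₂1 : 1 ≤ K₂) (hK₂t : K₂ ≤ t) (hdvd : K₂ ∣ v) (hK₁ : K₁ = v / K₂)
    (a : ℕ → ℕ)
    (ha : ∀ s ∈ Finset.Icc 1 (t - 1),
      a s ≤ lam * Nat.choose (v - t) (k - s) / Nat.choose (v - t) (k - t))
    (hnz : ∃ s ∈ Finset.Icc 1 (t - 1), a s ≠ 0) :
    -- (A1) each column of Q⁽⁰⁾ has Z₁ = λ_{K₂} stars
    (∀ k₁ ∈ Finset.Icc 1 K₁,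
      (𝒜.filter (fun A => Dblk K₂ k₁ ⊆ A)).card =
        lam * Nat.choose (v - K₂) (t - K₂) / Nat.choose (k - K₂) (t - K₂)) ∧
    -- (A2) each column of Q^(k₁) has Z₂ = λ₁ − λ_{K₂} stars
    (∀ k₁ ∈ Finset.Icc 1 K₁, ∀ i ∈ Dblk K₂ k₁,
      (𝒜.filter (fun A => Qmir K₂ k₁ A i = some none)).card =
        lam * Nat.choose (v - 1) (t - 1) / Nat.choose (k - 1) (t - 1)
          - lam * Nat.choose (v - K₂) (t - K₂) / Nat.choose (k - K₂) (t - K₂)) ∧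
    -- (A3) the symbol sets 𝒮_{k₁} are pairwise disjoint, and a star in Q⁽⁰⁾
    -- forces non-null entries in the corresponding row of Q^(k₁)
    (∀ k₁ ∈ Finset.Icc 1 K₁, ∀ k₁' ∈ Finset.Icc 1 K₁, k₁ ≠ k₁' →
      Disjoint (Ssym 𝒜 K₂ k₁) (Ssym 𝒜 K₂ k₁')) ∧
    (∀ k₁ ∈ Finset.Icc 1 K₁, ∀ A ∈ 𝒜, Dblk K₂ k₁ ⊆ A →
      ∀ i ∈ Dblk K₂ k₁, Qmir K₂ k₁ A i ≠ none) ∧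
    -- (A4) two distinct cells of Q^(k₁) with the same symbol lie in distinct
    -- rows and distinct columns and the cross cells are stars
    (∀ k₁ ∈ Finset.Icc 1 K₁, ∀ A ∈ 𝒜, ∀ A' ∈ 𝒜,
      ∀ i ∈ Dblk K₂ k₁, ∀ i' ∈ Dblk K₂ k₁,
      ((A, i) ≠ (A', i')) → ∀ l : ℕ × Finset ℕ,
        Qmir K₂ k₁ A i = some (some l) → Qmir K₂ k₁ A' i' = some (some l) →
          A ≠ A' ∧ i ≠ i' ∧
            Qmir K₂ k₁ A i' = some none ∧ Qmir K₂ k₁ A' i = some none) ∧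
    -- B is a (K', F', Z', |𝒮|) PDA
    ((Rset t a).card = ∑ s ∈ Finset.Icc 1 (t - 1), a s * Nat.choose t s ∧
      (∀ j ∈ Finset.Icc 1 t,
        ((Rset t a).filter (fun p => Bent p j = none)).card =
          ∑ s ∈ Finset.Icc 1 (t - 1), a s * Nat.choose (t - 1) (s - 1)) ∧
      (IntEntries t a).card =
        ∑ s ∈ Finset.Icc 1 (t - 1), a s * Nat.choose t (s + 1) ∧
      (∀ p ∈ Rset t a, ∀ p' ∈ Rset t a,
        ∀ j ∈ Finset.Icc 1 t, ∀ j' ∈ Finset.Icc 1 t,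
        (p, j) ≠ (p', j') → ∀ e : Finset ℕ × ℕ,
          Bent p j = some e → Bent p' j' = some e →
            p ≠ p' ∧ j ≠ j' ∧ Bent p j' = none ∧ Bent p' j = none)) ∧
    -- |𝒮_{k₁}| = λ_{K₂}·K₂ for every k₁ ∈ [K₁]
    (∀ k₁ ∈ Finset.Icc 1 K₁,
      (Ssym 𝒜 K₂ k₁).card =
        (lam * Nat.choose (v - K₂) (t - K₂) / Nat.choose (k - K₂) (t - K₂)) * K₂) ∧
    -- hotplug condition: for every set τ of K' = t users (k₁, i) with
    -- k₁ ∈ [K₁] and i ∈ D_{k₁}, there is a row set ζ of size F' on which the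
    -- star pattern of Q' matches that of B (under suitable bijections)
    (∀ τ : Finset (ℕ × ℕ),
      (∀ u ∈ τ, u.1 ∈ Finset.Icc 1 K₁ ∧ u.2 ∈ Dblk K₂ u.1) → τ.card = t →
      ∃ ζ : Finset (Finset ℕ), ζ ⊆ 𝒜 ∧
        ζ.card = ∑ s ∈ Finset.Icc 1 (t - 1), a s * Nat.choose t s ∧
        ∃ (ρ : Finset ℕ → Finset ℕ × ℕ) (σ : ℕ × ℕ → ℕ),
          Set.BijOn ρ ↑ζ ↑(Rset t a) ∧
          Set.BijOn σ ↑τ ↑(Finset.Icc 1 t) ∧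
          ∀ A ∈ ζ, ∀ u ∈ τ,
            ((Dblk K₂ u.1 ⊆ A ∨ Qmir K₂ u.1 A u.2 = some none) ↔
              σ u ∈ (ρ A).1)) :=
  stmt12_general t v k lam K₁ K₂ 𝒜 hdes hK₂t hK₁ a ha
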